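/- arXiv:1905.10882 — 2 statements merged into one kernel-verified Lean document; each statement's English description precedes it below -/
import Mathlib

section
/- Let f(x) = F(x, e^{h(x)}) be a nonzero E-polynomial with deg(h) = 1 and deg(F) = d, and let D = min{i : pder^{(i+1)}(f) = 0}. Then D ≤ d(d+1), and the total degree of the polynomial defining pder^{(i)}(f) is at most d for all 1 ≤ i ≤ D. -/
noncomputable section

/-- Evaluation of a bivariate integer polynomial (a polynomial in `Y` with coefficients
in `ℤ[X]`) at `(x, y) ∈ ℝ²`. -/
def ev (P : Polynomial (Polynomial ℤ)) (x y : ℝ) : ℝ :=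
  Polynomial.eval₂ (Polynomial.eval₂RingHom (Int.castRingHom ℝ) x) y P

/-- The E-polynomial `x ↦ F(x, e^{h(x)})`. -/
def epoly (h : Polynomial ℤ) (F : Polynomial (Polynomial ℤ)) (x : ℝ) : ℝ :=
  ev F x (Real.exp (Polynomial.eval₂ (Int.castRingHom ℝ) x h))

/-- Partial derivative with respect to `X` (the inner variable). -/
def dX (P : Polynomial (Polynomial ℤ)) : Polynomial (Polynomial ℤ) :=
  P.sum fun n c => Polynomial.C (Polynomial.derivative c) * Polynomial.X ^ n

/-- The polynomial `F̃ = ∂F/∂X + (∂F/∂Y)·h'(X)·Y` defining the derivative of the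
E-polynomial `x ↦ F(x, e^{h(x)})`. -/
def FtildeE (h : Polynomial ℤ) (F : Polynomial (Polynomial ℤ)) : Polynomial (Polynomial ℤ) :=
  dX F + Polynomial.derivative F * (Polynomial.C (Polynomial.derivative h) * Polynomial.X)

/-- The pseudo-derivative at the level of defining polynomials: it is `F̃` when
`deg_X F(X,0) > 0`; when `F(X,0)` is constant and `F̃ ≠ 0` it is `F̃` divided by the
largest power `Y^k` dividing it; and it is `0` when `F̃ = 0`. -/
def pderPoly (h : Polynomial ℤ) (F : Polynomial (Polynomial ℤ)) : Polynomial (Polynomial ℤ) :=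
  let Ft := FtildeE h F
  if Ft = 0 then 0
  else if 0 < (F.coeff 0).natDegree then Ft
  else Polynomial.divX^[Ft.natTrailingDegree] Ft

/-- Total degree of a bivariate polynomial written in `ℤ[X][Y]`. -/
def tdeg (P : Polynomial (Polynomial ℤ)) : ℕ :=
  P.support.sup fun n => n + (P.coeff n).natDegree

/-- Degree in `X` of a bivariate polynomial written in `ℤ[X][Y]`. -/
def degX (P : Polynomial (Polynomial ℤ)) : ℕ :=
  P.support.sup fun n => (P.coeff n).natDegree

open Polynomial

lemma coeff_dX (F : Polynomial (Polynomial ℤ)) (n : ℕ) :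
    (dX F).coeff n = derivative (F.coeff n) := by
  rw [dX, Polynomial.sum_def, finset_sum_coeff]
  simp only [coeff_C_mul_X_pow]
  rw [Finset.sum_ite_eq F.support n fun b => derivative (F.coeff b)]
  by_cases hn : n ∈ F.support
  · simp [hn]
  · simp [hn, Polynomial.notMem_support_iff.mp hn]

lemma coeff_FtildeE (h : Polynomial ℤ) (F : Polynomial (Polynomial ℤ)) (n : ℕ) :
    (FtildeE h F).coeff n
      = derivative (F.coeff n) + derivative h * (n : Polynomial ℤ) * F.coeff n := by
  rw [FtildeE, Polynomial.coeff_add, coeff_dX]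
  congr 1
  have : Polynomial.derivative F * (Polynomial.C (Polynomial.derivative h) * Polynomial.X)
      = (Polynomial.derivative F * Polynomial.C (Polynomial.derivative h)) * Polynomial.X := by
    ring
  rw [this]
  cases n with
  | zero => simp
  | succ m =>
      rw [Polynomial.coeff_mul_X, Polynomial.coeff_mul_C, Polynomial.coeff_derivative]
      push_cast
      ring

lemma tdeg_le {P : Polynomial (Polynomial ℤ)} {k : ℕ}
    (hk : ∀ n, P.coeff n ≠ 0 → n + (P.coeff n).natDegree ≤ k) : tdeg P ≤ k :=
  Finset.sup_le fun n hn => hk n (Polynomial.mem_support_iff.mp hn)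

lemma le_tdeg {P : Polynomial (Polynomial ℤ)} {n : ℕ} (hn : P.coeff n ≠ 0) :
    n + (P.coeff n).natDegree ≤ tdeg P := by
  unfold tdeg
  exact Finset.le_sup (f := fun n => n + (P.coeff n).natDegree)
    (Polynomial.mem_support_iff.mpr hn)

lemma coeff0_natDegree_le_tdeg (P : Polynomial (Polynomial ℤ)) :
    (P.coeff 0).natDegree ≤ tdeg P := by
  by_cases h0 : P.coeff 0 = 0
  · simp [h0]
  · simpa using le_tdeg h0

lemma tdeg_FtildeE_le (h : Polynomial ℤ) (hδ : h.natDegree = 1)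
    (F : Polynomial (Polynomial ℤ)) : tdeg (FtildeE h F) ≤ tdeg F := by
  apply tdeg_le
  intro n hn
  have hFn : F.coeff n ≠ 0 := by
    intro h0
    apply hn
    rw [coeff_FtildeE, h0]
    simp
  have h1 : ((FtildeE h F).coeff n).natDegree ≤ (F.coeff n).natDegree := by
    rw [coeff_FtildeE]
    apply le_trans (Polynomial.natDegree_add_le _ _)
    apply max_le
    · exact le_trans (Polynomial.natDegree_derivative_le _) (Nat.sub_le _ _)
    · apply le_trans (Polynomial.natDegree_mul_le)
      have h2 : (derivative h * (n : Polynomial ℤ)).natDegree = 0 := by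
        apply Nat.eq_zero_of_le_zero
        apply le_trans (Polynomial.natDegree_mul_le)
        have h3 : (derivative h).natDegree = 0 := by
          have := Polynomial.natDegree_derivative_le h
          omega
        have h4 : ((n : Polynomial ℤ)).natDegree = 0 := Polynomial.natDegree_natCast n
        omega
      have h5 : (F.coeff n).natDegree ≤ 0 + (F.coeff n).natDegree := by omega
      omega
  have := le_tdeg hFn
  omega

lemma coeff_divX_iter (P : Polynomial (Polynomial ℤ)) (k n : ℕ) :
    (Polynomial.divX^[k] P).coeff n = P.coeff (n + k) := by
  induction k generalizing P with
  | zero => simp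
  | succ m ih =>
      rw [Function.iterate_succ_apply, ih, Polynomial.coeff_divX]
      ring_nf

lemma tdeg_divX_iter_le (P : Polynomial (Polynomial ℤ)) (k : ℕ) :
    tdeg (Polynomial.divX^[k] P) ≤ tdeg P := by
  apply tdeg_le
  intro n hn
  rw [coeff_divX_iter] at hn ⊢
  have := le_tdeg hn
  omega

lemma tdeg_divX_iter_add_le (P : Polynomial (Polynomial ℤ)) (k : ℕ)
    (hne : Polynomial.divX^[k] P ≠ 0) :
    tdeg (Polynomial.divX^[k] P) + k ≤ tdeg P := by
  obtain ⟨n, hn⟩ : ∃ n, (Polynomial.divX^[k] P).coeff n ≠ 0 := by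
    by_contra hc
    push_neg at hc
    exact hne (Polynomial.ext fun n => by simp [hc n])
  have hk : k ≤ tdeg P := by
    rw [coeff_divX_iter] at hn
    have := le_tdeg hn
    omega
  have h1 : tdeg (Polynomial.divX^[k] P) ≤ tdeg P - k := by
    apply tdeg_le
    intro m hm
    rw [coeff_divX_iter] at hm ⊢
    have := le_tdeg hm
    omega
  omega

lemma tdeg_pderPoly_le (h : Polynomial ℤ) (hδ : h.natDegree = 1)
    (F : Polynomial (Polynomial ℤ)) : tdeg (pderPoly h F) ≤ tdeg F := by
  rw [pderPoly]
  by_cases h0 : FtildeE h F = 0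
  · simp [h0, tdeg]
  · simp only [h0, if_false]
    by_cases h1 : 0 < (F.coeff 0).natDegree
    · simpa [h1] using tdeg_FtildeE_le h hδ F
    · simp only [h1, if_false]
      exact le_trans (tdeg_divX_iter_le _ _) (tdeg_FtildeE_le h hδ F)

lemma phi_decrease (h : Polynomial ℤ) (hδ : h.natDegree = 1) (d : ℕ)
    (G : Polynomial (Polynomial ℤ)) (hG' : pderPoly h G ≠ 0) (hle : tdeg G ≤ d) :
    d * tdeg (pderPoly h G) + ((pderPoly h G).coeff 0).natDegree + 1
      ≤ d * tdeg G + (G.coeff 0).natDegree := by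
  have hFt : FtildeE h G ≠ 0 := by
    intro hc
    exact hG' (by simp [pderPoly, hc])
  have htF : tdeg (FtildeE h G) ≤ tdeg G := tdeg_FtildeE_le h hδ G
  by_cases hm : 0 < (G.coeff 0).natDegree
  · have hpd : pderPoly h G = FtildeE h G := by simp [pderPoly, hFt, hm]
    have hc0 : (FtildeE h G).coeff 0 = derivative (G.coeff 0) := by
      rw [coeff_FtildeE]; simp
    have hlt : ((FtildeE h G).coeff 0).natDegree < (G.coeff 0).natDegree := by
      rw [hc0]
      exact Polynomial.natDegree_derivative_lt (by omega)
    rw [hpd]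
    have : d * tdeg (FtildeE h G) ≤ d * tdeg G := Nat.mul_le_mul_left d htF
    omega
  · have hm0 : (G.coeff 0).natDegree = 0 := by omega
    have hc0 : (FtildeE h G).coeff 0 = 0 := by
      rw [coeff_FtildeE]
      have : derivative (G.coeff 0) = 0 := by
        obtain ⟨a, ha⟩ := Polynomial.natDegree_eq_zero.mp hm0
        rw [← ha]; simp
      simp [this]
    have hk : 0 < (FtildeE h G).natTrailingDegree := by
      rcases Nat.eq_zero_or_pos (FtildeE h G).natTrailingDegree with hz | hp
      · rcases Polynomial.natTrailingDegree_eq_zero.mp hz with h' | h'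
        · exact absurd h' hFt
        · exact absurd hc0 h'
      · exact hp
    have hpd : pderPoly h G
        = Polynomial.divX^[(FtildeE h G).natTrailingDegree] (FtildeE h G) := by
      simp [pderPoly, hFt, hm]
    have hne : Polynomial.divX^[(FtildeE h G).natTrailingDegree] (FtildeE h G) ≠ 0 := by
      rw [← hpd]; exact hG'
    have hdrop := tdeg_divX_iter_add_le (FtildeE h G) (FtildeE h G).natTrailingDegree hne
    rw [hpd]
    set t' := tdeg (Polynomial.divX^[(FtildeE h G).natTrailingDegree] (FtildeE h G)) with ht'
    have hm' : ((Polynomial.divX^[(FtildeE h G).natTrailingDegree] (FtildeE h G)).coeff 0).natDegree ≤ t' :=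
      coeff0_natDegree_le_tdeg _
    have h1 : t' + 1 ≤ tdeg G := by omega
    have h2 : t' + 1 ≤ d := by omega
    have h3 : d * t' + d ≤ d * tdeg G := by
      calc d * t' + d = d * (t' + 1) := by ring
        _ ≤ d * tdeg G := Nat.mul_le_mul_left d h1
    omega

theorem pder_iter_degree_bound_linear (h : Polynomial ℤ) (F : Polynomial (Polynomial ℤ))
    (hF : F ≠ 0) (d : ℕ) (hd : tdeg F = d) (hδ : h.natDegree = 1)
    (D : ℕ) (hD : (pderPoly h)^[D + 1] F = 0)
    (hDmin : ∀ i < D, (pderPoly h)^[i + 1] F ≠ 0) :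
    D ≤ d * (d + 1) ∧
      ∀ i, 1 ≤ i → i ≤ D → tdeg ((pderPoly h)^[i] F) ≤ d := by
  have tle : ∀ i, tdeg ((pderPoly h)^[i] F) ≤ d := by
    intro i
    induction i with
    | zero => simp [hd]
    | succ m ih =>
        rw [Function.iterate_succ_apply']
        exact le_trans (tdeg_pderPoly_le h hδ _) ih
  have key : ∀ i ≤ D, (pderPoly h)^[i] F ≠ 0 := by
    intro i hi
    cases i with
    | zero => simpa using hF
    | succ m => exact hDmin m (by omega)
  have dec : ∀ i ≤ D,
      d * tdeg ((pderPoly h)^[i] F) + (((pderPoly h)^[i] F).coeff 0).natDegree + i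
        ≤ d * d + (F.coeff 0).natDegree := by
    intro i hi
    induction i with
    | zero => simp [hd]
    | succ m ih =>
        have hm : m ≤ D := by omega
        have hk := key (m + 1) hi
        rw [Function.iterate_succ_apply'] at hk
        have step := phi_decrease h hδ d ((pderPoly h)^[m] F) hk (tle m)
        have := ih hm
        rw [Function.iterate_succ_apply']
        omega
  constructor
  · have := dec D le_rfl
    have hmF : (F.coeff 0).natDegree ≤ d := hd ▸ coeff0_natDegree_le_tdeg F
    nlinarith
  · intro i _ _
    exact tle i

end
end

section
/- Let f be an E-polynomial and ξ₁ ≠ ξ₂ two real zeros of f with Thom encodings (f, ε₁) and (f, ε₂), where ε_j : {0,…,D} → {−1,0,1}. Let k = max{0 ≤ i ≤ D : ε₁(i) ≠ ε₂(i)}; then ε₁(k+1) = ε₂(k+1) ≠ 0, and if ε₁(k+1) = 1 then ξ₁ > ξ₂ iff ε₁(k) > ε₂(k), while if ε₁(k+1) = −1 then ξ₁ > ξ₂ iff ε₁(k) < ε₂(k). -/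
noncomputable section

/-- The `i`-th entry of the Thom encoding of `ξ` with respect to the E-polynomial
defined by `h` and `F`: the sign of the `i`-th iterated pseudo-derivative at `ξ`. -/
def thomSign (h : Polynomial ℤ) (F : Polynomial (Polynomial ℤ)) (i : ℕ) (ξ : ℝ) : ℝ :=
  Real.sign (epoly h ((pderPoly h)^[i] F) ξ)

/-!
Write `gᵢ` for the E-polynomial defined by the `i`-th pseudo-derivative. Since `pderPoly`
only divides `F̃` by a power of `Y`, which evaluates to a positive power of `exp (h x)`,
`gᵢ'` has the sign of `gᵢ₊₁` everywhere. By downward induction from `g_{D+1} = 0`, the sign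
of `gᵢ` is constant on `[ξ₁, ξ₂]` for `k < i`: if it is for `gᵢ₊₁`, then `gᵢ` is monotone there,
and a monotone function with equal signs at the endpoints has constant sign in between.
So `g_k` is strictly monotone on `[ξ₁, ξ₂]` in the direction given by the sign `s` of `g_{k+1}`
(`s = 0` would make `g_k` constant, against `ε₁(k) ≠ ε₂(k)`), and comparing the signs of `g_k` at
the endpoints compares `ξ₁` and `ξ₂`.
-/

open Set

namespace Real

lemma sign_monotone : Monotone Real.sign := by
  intro a b hab
  unfold Real.sign
  split_ifs <;> linarith

lemma sign_eq_one_iff {r : ℝ} : Real.sign r = 1 ↔ 0 < r := by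
  unfold Real.sign
  split_ifs <;> constructor <;> intro <;> linarith

lemma sign_eq_neg_one_iff {r : ℝ} : Real.sign r = -1 ↔ r < 0 := by
  unfold Real.sign
  split_ifs <;> constructor <;> intro <;> linarith

lemma sign_nonneg_iff {r : ℝ} : 0 ≤ Real.sign r ↔ 0 ≤ r := by
  unfold Real.sign
  split_ifs <;> constructor <;> intro <;> linarith

lemma sign_nonpos_iff {r : ℝ} : Real.sign r ≤ 0 ↔ r ≤ 0 := by
  unfold Real.sign
  split_ifs <;> constructor <;> intro <;> linarith

lemma sign_mul_of_pos_left {c : ℝ} (hc : 0 < c) (r : ℝ) : Real.sign (c * r) = Real.sign r := by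
  have hneg : c * r < 0 ↔ r < 0 := by simpa using mul_lt_mul_iff_right₀ (b := r) (c := 0) hc
  simp only [Real.sign, hneg, mul_pos_iff_of_pos_left hc]

lemma sign_lt_sign_iff_of_ne {a b : ℝ} (hab : Real.sign a ≠ Real.sign b) :
    Real.sign a < Real.sign b ↔ a < b :=
  ⟨sign_monotone.reflect_lt, fun h => (sign_monotone h.le).lt_of_ne hab⟩

end Real

section SignOfDeriv

variable {f : ℝ → ℝ} {S : Set ℝ}

lemma Convex.is_const_of_deriv_eq_zero (hS : Convex ℝ S) (hf : Differentiable ℝ f)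
    (hf' : ∀ x ∈ S, deriv f x = 0) {x y : ℝ} (hx : x ∈ S) (hy : y ∈ S) : f x = f y := by
  have := hS.norm_image_sub_le_of_norm_deriv_le (fun z _ => hf z) (C := 0)
    (fun z hz => by rw [hf' z hz, norm_zero]) hy hx
  rwa [zero_mul, norm_le_zero_iff, sub_eq_zero] at this

lemma Convex.strictMonoOn_of_sign_deriv_eq_one (hS : Convex ℝ S) (hf : Continuous f)
    (hf' : ∀ x ∈ S, Real.sign (deriv f x) = 1) : StrictMonoOn f S :=
  strictMonoOn_of_deriv_pos hS hf.continuousOn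
    fun x hx => Real.sign_eq_one_iff.1 (hf' x (interior_subset hx))

lemma Convex.strictAntiOn_of_sign_deriv_eq_neg_one (hS : Convex ℝ S) (hf : Continuous f)
    (hf' : ∀ x ∈ S, Real.sign (deriv f x) = -1) : StrictAntiOn f S :=
  strictAntiOn_of_deriv_neg hS hf.continuousOn
    fun x hx => Real.sign_eq_neg_one_iff.1 (hf' x (interior_subset hx))

lemma Convex.monotoneOn_or_antitoneOn_of_sign_deriv_eq (hS : Convex ℝ S)
    (hf : Differentiable ℝ f) {s : ℝ} (hf' : ∀ x ∈ S, Real.sign (deriv f x) = s) :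
    MonotoneOn f S ∨ AntitoneOn f S := by
  rcases le_total 0 s with hs | hs
  · refine .inl (monotoneOn_of_deriv_nonneg hS hf.continuous.continuousOn
      hf.differentiableOn fun x hx => ?_)
    exact Real.sign_nonneg_iff.1 (hf' x (interior_subset hx) ▸ hs)
  · refine .inr (antitoneOn_of_deriv_nonpos hS hf.continuous.continuousOn
      hf.differentiableOn fun x hx => ?_)
    exact Real.sign_nonpos_iff.1 (hf' x (interior_subset hx) ▸ hs)

lemma sign_eq_sign_left_of_mem_uIcc {a b : ℝ}
    (hf : MonotoneOn f (uIcc a b) ∨ AntitoneOn f (uIcc a b))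
    (hab : Real.sign (f a) = Real.sign (f b)) {x : ℝ} (hx : x ∈ uIcc a b) :
    Real.sign (f x) = Real.sign (f a) := by
  have hfx : f x ∈ uIcc (f a) (f b) := by
    rcases hf with hf | hf
    exacts [hf.mapsTo_uIcc hx, hf.mapsTo_uIcc hx]
  simpa [← hab] using Real.sign_monotone.mapsTo_uIcc hfx

end SignOfDeriv

section SignChain

variable {g : ℕ → ℝ → ℝ} (hg : ∀ i, Differentiable ℝ (g i))
  (hg' : ∀ i x, Real.sign (deriv (g i) x) = Real.sign (g (i + 1) x))
include hg hg'

lemma sign_eqOn_uIcc_of_sign_eq_above {a b : ℝ} {k D : ℕ} (hD : g (D + 1) = 0)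
    (habove : ∀ i, k < i → i ≤ D → Real.sign (g i a) = Real.sign (g i b))
    {i : ℕ} (hki : k + 1 ≤ i) (hiD : i ≤ D + 1) :
    ∀ x ∈ uIcc a b, Real.sign (g i x) = Real.sign (g i a) := by
  refine Nat.decreasingInduction'
    (P := fun j => ∀ x ∈ uIcc a b, Real.sign (g j x) = Real.sign (g j a))
    (fun j hjD hij ih => ?_) hiD (by simp [hD])
  have hmono := (convex_uIcc a b).monotoneOn_or_antitoneOn_of_sign_deriv_eq (hg j)
    fun x hx => (hg' j x).trans (ih x hx)
  exact fun x hx => sign_eq_sign_left_of_mem_uIcc hmono (habove j (by omega) (by omega)) hx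

theorem sign_chain_order {a b : ℝ} {k D : ℕ} (hD : g (D + 1) = 0) (hkD : k ≤ D)
    (hk : Real.sign (g k a) ≠ Real.sign (g k b))
    (habove : ∀ i, k < i → i ≤ D → Real.sign (g i a) = Real.sign (g i b)) :
    k < D ∧
    Real.sign (g (k + 1) a) = Real.sign (g (k + 1) b) ∧
    Real.sign (g (k + 1) a) ≠ 0 ∧
    (Real.sign (g (k + 1) a) = 1 → (b < a ↔ Real.sign (g k b) < Real.sign (g k a))) ∧
    (Real.sign (g (k + 1) a) = -1 → (b < a ↔ Real.sign (g k a) < Real.sign (g k b))) := by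
  have hconst := sign_eqOn_uIcc_of_sign_eq_above hg hg' hD habove le_rfl (by omega)
  have hderiv : ∀ x ∈ uIcc a b, Real.sign (deriv (g k) x) = Real.sign (g (k + 1) a) :=
    fun x hx => (hg' k x).trans (hconst x hx)
  have hne : Real.sign (g (k + 1) a) ≠ 0 := fun h0 =>
    hk <| congrArg Real.sign <| (convex_uIcc a b).is_const_of_deriv_eq_zero (hg k)
      (fun x hx => Real.sign_eq_zero_iff.1 ((hderiv x hx).trans h0)) left_mem_uIcc right_mem_uIcc
  refine ⟨hkD.lt_of_ne ?_, (hconst b right_mem_uIcc).symm, hne, fun hs => ?_, fun hs => ?_⟩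
  · rintro rfl
    simp [hD] at hne
  · rw [Real.sign_lt_sign_iff_of_ne hk.symm]
    exact (((convex_uIcc a b).strictMonoOn_of_sign_deriv_eq_one (hg k).continuous
      (hs ▸ hderiv)).lt_iff_lt right_mem_uIcc left_mem_uIcc).symm
  · rw [Real.sign_lt_sign_iff_of_ne hk]
    exact (((convex_uIcc a b).strictAntiOn_of_sign_deriv_eq_neg_one (hg k).continuous
      (hs ▸ hderiv)).lt_iff_gt left_mem_uIcc right_mem_uIcc).symm

end SignChain

open Polynomial

namespace Polynomial

variable {R : Type*} [Semiring R]

lemma coeff_divX_iterate (m : ℕ) (p : R[X]) (n : ℕ) : (divX^[m] p).coeff n = p.coeff (n + m) := by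
  induction m generalizing p with
  | zero => rfl
  | succ m ih => rw [Function.iterate_succ_apply, ih, coeff_divX, add_assoc]

lemma X_pow_mul_divX_iterate {p : R[X]} {m : ℕ} (hm : m ≤ p.natTrailingDegree) :
    X ^ m * divX^[m] p = p := by
  ext n
  rw [coeff_X_pow_mul', coeff_divX_iterate]
  split_ifs with hmn
  · rw [Nat.sub_add_cancel hmn]
  · exact (coeff_eq_zero_of_lt_natTrailingDegree (by omega)).symm

end Polynomial

lemma dX_add (p q : Polynomial (Polynomial ℤ)) : dX (p + q) = dX p + dX q :=
  sum_add_index _ _ _ (fun _ => by simp) fun _ _ _ => by simp [add_mul]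

lemma dX_monomial (n : ℕ) (c : Polynomial ℤ) : dX (monomial n c) = C (derivative c) * X ^ n :=
  sum_monomial_index _ _ (by simp)

lemma hasDerivAt_eval₂_intCast (c : Polynomial ℤ) (x : ℝ) :
    HasDerivAt (fun x => c.eval₂ (Int.castRingHom ℝ) x)
      ((derivative c).eval₂ (Int.castRingHom ℝ) x) x := by
  simpa only [aeval_def, algebraMap_int_eq] using c.hasDerivAt_aeval x

lemma hasDerivAt_ev (P : Polynomial (Polynomial ℤ)) {y : ℝ → ℝ} {y' x : ℝ}
    (hy : HasDerivAt y y' x) :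
    HasDerivAt (fun x => ev P x (y x)) (ev (dX P) x (y x) + ev (derivative P) x (y x) * y') x := by
  induction P using Polynomial.induction_on' with
  | add p q hp hq =>
    simp only [ev, dX_add, derivative_add, eval₂_add] at hp hq ⊢
    exact (hp.add hq).congr_deriv (by ring)
  | monomial n c =>
    simp only [ev, dX_monomial, derivative_monomial, eval₂_monomial, eval₂_mul, eval₂_C,
      eval₂_X_pow, coe_eval₂RingHom]
    refine ((hasDerivAt_eval₂_intCast c x).mul (hy.pow n)).congr_deriv ?_
    simp only [Pi.pow_apply, eval₂_natCast]
    ring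

lemma hasDerivAt_epoly (h : Polynomial ℤ) (F : Polynomial (Polynomial ℤ)) (x : ℝ) :
    HasDerivAt (epoly h F) (epoly h (FtildeE h F) x) x := by
  refine (hasDerivAt_ev F (hasDerivAt_eval₂_intCast h x).exp).congr_deriv ?_
  simp only [epoly, FtildeE, ev, eval₂_add, eval₂_mul, eval₂_C, eval₂_X, coe_eval₂RingHom]
  ring

lemma sign_epoly_pderPoly (h : Polynomial ℤ) (F : Polynomial (Polynomial ℤ)) (x : ℝ) :
    Real.sign (epoly h (pderPoly h F) x) = Real.sign (deriv (epoly h F) x) := by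
  rw [(hasDerivAt_epoly h F x).deriv, pderPoly]
  split_ifs with hF0
  · rw [hF0]
  · rfl
  · conv_rhs => rw [← X_pow_mul_divX_iterate (le_refl (FtildeE h F).natTrailingDegree)]
    simp only [epoly, ev, eval₂_mul, eval₂_X_pow]
    exact (Real.sign_mul_of_pos_left (pow_pos (Real.exp_pos _) _) _).symm

lemma epoly_zero (h : Polynomial ℤ) : epoly h 0 = 0 := by
  ext x
  simp [epoly, ev]

theorem thom_encoding_order_general (h : Polynomial ℤ)
    (F : Polynomial (Polynomial ℤ)) (D : ℕ)
    (hD : (pderPoly h)^[D + 1] F = 0)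
    (ξ₁ ξ₂ : ℝ)
    (k : ℕ) (hkD : k ≤ D)
    (hkdiff : thomSign h F k ξ₁ ≠ thomSign h F k ξ₂)
    (hkmax : ∀ i, k < i → i ≤ D → thomSign h F i ξ₁ = thomSign h F i ξ₂) :
    k < D ∧
    thomSign h F (k + 1) ξ₁ = thomSign h F (k + 1) ξ₂ ∧
    thomSign h F (k + 1) ξ₁ ≠ 0 ∧
    (thomSign h F (k + 1) ξ₁ = 1 →
      (ξ₂ < ξ₁ ↔ thomSign h F k ξ₂ < thomSign h F k ξ₁)) ∧
    (thomSign h F (k + 1) ξ₁ = -1 →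
      (ξ₂ < ξ₁ ↔ thomSign h F k ξ₁ < thomSign h F k ξ₂)) :=
  sign_chain_order (g := fun i => epoly h ((pderPoly h)^[i] F))
    (fun _ x => (hasDerivAt_epoly h _ x).differentiableAt)
    (fun _ x => by rw [Function.iterate_succ_apply', sign_epoly_pderPoly])
    (by simp only [hD, epoly_zero]) hkD hkdiff hkmax

theorem thom_encoding_order (h : Polynomial ℤ) (hh : 0 < h.natDegree)
    (F : Polynomial (Polynomial ℤ)) (hF : F ≠ 0) (D : ℕ)
    (hD : (pderPoly h)^[D + 1] F = 0)
    (hDmin : ∀ i < D, (pderPoly h)^[i + 1] F ≠ 0)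
    (ξ₁ ξ₂ : ℝ) (hξ : ξ₁ ≠ ξ₂) (h1 : epoly h F ξ₁ = 0) (h2 : epoly h F ξ₂ = 0)
    (k : ℕ) (hkD : k ≤ D)
    (hkdiff : thomSign h F k ξ₁ ≠ thomSign h F k ξ₂)
    (hkmax : ∀ i, k < i → i ≤ D → thomSign h F i ξ₁ = thomSign h F i ξ₂) :
    k < D ∧
    thomSign h F (k + 1) ξ₁ = thomSign h F (k + 1) ξ₂ ∧
    thomSign h F (k + 1) ξ₁ ≠ 0 ∧
    (thomSign h F (k + 1) ξ₁ = 1 →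
      (ξ₂ < ξ₁ ↔ thomSign h F k ξ₂ < thomSign h F k ξ₁)) ∧
    (thomSign h F (k + 1) ξ₁ = -1 →
      (ξ₂ < ξ₁ ↔ thomSign h F k ξ₁ < thomSign h F k ξ₂)) :=
  thom_encoding_order_general h F D hD ξ₁ ξ₂ k hkD hkdiff hkmax

end
end
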